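/- arXiv:2307.10158 — 2 statements merged into one kernel-verified Lean document; each statement's English description precedes it below -/
import Mathlib

section
/- Let pen be a real-valued polyhedral gauge on ℝ^p, i.e. pen(b) = max{⟨u_1,b⟩,…,⟨u_k,b⟩} for finitely many vectors u_1,…,u_k ∈ ℝ^p with u_1 = 0, and let β ∈ ℝ^p. Then the complexity of the pattern of β, i.e. the dimension of the linear span of C_β, equals p minus the dimension of the face ∂pen(β), where the dimension of ∂pen(β) is the dimension of the direction space of its affine hull. -/
open scoped RealInnerProductSpace

noncomputable section

/-- Convert a plain coordinate vector to an element of Euclidean space. -/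
def toEuc {n : ℕ} (v : Fin n → ℝ) : EuclideanSpace ℝ (Fin n) :=
  (WithLp.equiv 2 (Fin n → ℝ)).symm v

/-- The subdifferential of `φ : ℝ^p → ℝ` at `β`:
`∂φ(β) = {s : φ(β) + ⟪s, b − β⟫ ≤ φ(b) for all b}`. -/
def subdiff {p : ℕ} (φ : EuclideanSpace ℝ (Fin p) → ℝ) (β : EuclideanSpace ℝ (Fin p)) :
    Set (EuclideanSpace ℝ (Fin p)) :=
  {s | ∀ b, φ β + ⟪s, b - β⟫ ≤ φ b}

/-- `S_{X,λpen}(y)`: the set of minimizers of `b ↦ (1/2)‖y − Xb‖₂² + λ·pen(b)`. -/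
def Smin {n p : ℕ} (X : Matrix (Fin n) (Fin p) ℝ) (lam : ℝ)
    (pen : EuclideanSpace ℝ (Fin p) → ℝ) (y : EuclideanSpace ℝ (Fin n)) :
    Set (EuclideanSpace ℝ (Fin p)) :=
  {b | ∀ b' : EuclideanSpace ℝ (Fin p), (1/2) * ‖y - toEuc (X.mulVec b)‖^2 + lam * pen b
        ≤ (1/2) * ‖y - toEuc (X.mulVec b')‖^2 + lam * pen b'}

/-- The row space of a matrix `X`: `{Xᵀz : z ∈ ℝ^n}`. -/
def rowSpace {n p : ℕ} (X : Matrix (Fin n) (Fin p) ℝ) : Set (EuclideanSpace ℝ (Fin p)) :=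
  Set.range fun z : EuclideanSpace ℝ (Fin n) => toEuc (X.transpose.mulVec z)

/-- The normal cone of a set `K` at `x`: `{s : ⟪s, b − x⟫ ≤ 0 for all b ∈ K}`. -/
def normalCone' {p : ℕ} (K : Set (EuclideanSpace ℝ (Fin p))) (x : EuclideanSpace ℝ (Fin p)) :
    Set (EuclideanSpace ℝ (Fin p)) :=
  {s | ∀ b ∈ K, ⟪s, b - x⟫ ≤ 0}

/-- The supremum norm `‖x‖_∞` on Euclidean space. -/
def supNorm {p : ℕ} (x : EuclideanSpace ℝ (Fin p)) : ℝ := ⨆ i, abs (x i)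

/-- `F` is an (exposed) face of `P`: `F = {x ∈ P : ⟪a,x⟫ = c}` for some valid inequality
`⟪a,x⟫ ≤ c` of `P`. -/
def IsFace {p : ℕ} (P F : Set (EuclideanSpace ℝ (Fin p))) : Prop :=
  ∃ (a : EuclideanSpace ℝ (Fin p)) (c : ℝ),
    (∀ x ∈ P, ⟪a, x⟫ ≤ c) ∧ F = {x ∈ P | ⟪a, x⟫ = c}

/-!
Since `pen` is sublinear, `∂pen(x)` consists of the linear minorants `s ≤ pen` with
`⟪s, x⟫ = pen x`. Hence every `x` with `∂pen(x) = ∂pen(β)` is orthogonal to the direction `W` of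
the face `∂pen(β)`. Conversely, for `v ∈ Wᗮ` all pieces `u i` active at `β` lie in `∂pen(β)`
and so have the same slope along `v`; then `pen` is affine on a short ray `β + τ • v`, and
`∂pen` is constant on it, which puts `v` in the span of the pattern class. Thus that span is
`Wᗮ`, of dimension `p - dim W`.
-/

open Filter Topology

section Sublinear

variable {p : ℕ} {φ : EuclideanSpace ℝ (Fin p) → ℝ}

theorem mem_subdiff_iff_of_sublinear (h0 : φ 0 ≤ 0) (hadd : ∀ a b, φ (a + b) ≤ φ a + φ b)
    {s y : EuclideanSpace ℝ (Fin p)} :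
    s ∈ subdiff φ y ↔ (∀ b, ⟪s, b⟫ ≤ φ b) ∧ ⟪s, y⟫ = φ y := by
  constructor
  · intro h
    have at_zero := h 0
    have at_double := h (y + y)
    rw [zero_sub, inner_neg_right] at at_zero
    rw [add_sub_cancel_right] at at_double
    have hy : ⟪s, y⟫ = φ y := by linarith [hadd y y]
    refine ⟨fun b => ?_, hy⟩
    linarith [h b, inner_sub_right (𝕜 := ℝ) s b y]
  · rintro ⟨hle, hy⟩ b
    linarith [hle b, inner_sub_right (𝕜 := ℝ) s b y]

/-- A subgradient at `β + τ • v` is squeezed between the points `β` and `β + σ • v` of the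
ray, on which `φ` is affine. -/
theorem subdiff_add_smul_eq (h0 : φ 0 ≤ 0) (hadd : ∀ a b, φ (a + b) ≤ φ a + φ b)
    {β v : EuclideanSpace ℝ (Fin p)} {c τ σ : ℝ} (hslope : ∀ s ∈ subdiff φ β, ⟪s, v⟫ = c)
    (hτ : 0 < τ) (hτσ : τ < σ) (hφτ : φ (β + τ • v) = φ β + τ * c)
    (hφσ : φ (β + σ • v) = φ β + σ * c) :
    subdiff φ (β + τ • v) = subdiff φ β := by
  ext s
  simp only [mem_subdiff_iff_of_sublinear h0 hadd, inner_add_right, real_inner_smul_right, hφτ]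
  refine ⟨fun ⟨hle, hs⟩ => ⟨hle, ?_⟩, fun ⟨hle, hs⟩ => ⟨hle, ?_⟩⟩
  · have at_β := hle β
    have at_σ := hle (β + σ • v)
    rw [inner_add_right, real_inner_smul_right, hφσ] at at_σ
    nlinarith
  · rw [hslope s ((mem_subdiff_iff_of_sublinear h0 hadd).2 ⟨hle, hs⟩), hs]

theorem exists_subdiff_add_smul_eq (h0 : φ 0 ≤ 0) (hadd : ∀ a b, φ (a + b) ≤ φ a + φ b)
    {β v : EuclideanSpace ℝ (Fin p)} {c : ℝ} (hslope : ∀ s ∈ subdiff φ β, ⟪s, v⟫ = c)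
    (haffine : ∀ᶠ τ in 𝓝[>] 0, φ (β + τ • v) = φ β + τ * c) :
    ∃ τ > (0 : ℝ), subdiff φ (β + τ • v) = subdiff φ β := by
  obtain ⟨ε, hε : 0 < ε, hsub⟩ := mem_nhdsGT_iff_exists_Ioc_subset.1 haffine
  exact ⟨ε / 2, by positivity, subdiff_add_smul_eq h0 hadd hslope (by positivity)
    (by linarith) (hsub ⟨by positivity, by linarith⟩) (hsub ⟨hε, le_rfl⟩)⟩

end Sublinear

theorem mem_orthogonal_direction_affineSpan_iff {E : Type*} [NormedAddCommGroup E]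
    [InnerProductSpace ℝ E] {F : Set E} {x : E} :
    x ∈ (affineSpan ℝ F).directionᗮ ↔ ∀ a ∈ F, ∀ b ∈ F, ⟪a, x⟫ = ⟪b, x⟫ := by
  have hker : x ∈ (affineSpan ℝ F).directionᗮ ↔ vectorSpan ℝ F ≤ LinearMap.ker (innerₛₗ ℝ x) := by
    rw [direction_affineSpan, Submodule.mem_orthogonal']; rfl
  rw [hker, vectorSpan_def, Submodule.span_le, Set.vsub_subset_iff]
  simp only [SetLike.mem_coe, LinearMap.mem_ker, innerₛₗ_apply_apply, vsub_eq_sub,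
    inner_sub_right, sub_eq_zero, real_inner_comm x]

theorem mem_span_of_add_smul_mem {E : Type*} [AddCommGroup E] [Module ℝ E] {S : Set E}
    {β v : E} {τ : ℝ} (hτ : τ ≠ 0) (hβ : β ∈ S) (hβv : β + τ • v ∈ S) :
    v ∈ Submodule.span ℝ S := by
  have hdiff :=
    (Submodule.span ℝ S).sub_mem (Submodule.subset_span hβv) (Submodule.subset_span hβ)
  rw [add_sub_cancel_left] at hdiff
  simpa [smul_smul, inv_mul_cancel₀ hτ] using Submodule.smul_mem _ τ⁻¹ hdiff

section PolyhedralGauge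

variable {p k : ℕ} {u : Fin (k + 1) → EuclideanSpace ℝ (Fin p)}
  {pen : EuclideanSpace ℝ (Fin p) → ℝ}
  (hpen : ∀ x, pen x = Finset.univ.sup' Finset.univ_nonempty fun i => ⟪u i, x⟫)
include hpen

theorem inner_le_pen (b : EuclideanSpace ℝ (Fin p)) (i : Fin (k + 1)) : ⟪u i, b⟫ ≤ pen b :=
  hpen b ▸ Finset.le_sup' (fun j => ⟪u j, b⟫) (Finset.mem_univ i)

theorem pen_zero_le : pen 0 ≤ 0 := by
  rw [hpen]
  exact Finset.sup'_le _ _ fun i _ => (inner_zero_right (u i)).le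

theorem pen_add_le (a b : EuclideanSpace ℝ (Fin p)) : pen (a + b) ≤ pen a + pen b := by
  rw [hpen (a + b)]
  exact Finset.sup'_le _ _ fun i _ => by
    rw [inner_add_right]; exact add_le_add (inner_le_pen hpen a i) (inner_le_pen hpen b i)

theorem exists_inner_eq_pen (β : EuclideanSpace ℝ (Fin p)) : ∃ i, ⟪u i, β⟫ = pen β := by
  obtain ⟨i, -, hi⟩ := Finset.exists_mem_eq_sup' Finset.univ_nonempty fun i => ⟪u i, β⟫
  exact ⟨i, by rw [hpen, hi]⟩

/-- The pieces inactive at `β` stay strictly below `pen β + τ * c` for small `τ` by continuity,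
and the active ones are all equal to it. -/
theorem eventually_pen_add_smul {β v : EuclideanSpace ℝ (Fin p)} {c : ℝ}
    (hslope : ∀ i, ⟪u i, β⟫ = pen β → ⟪u i, v⟫ = c) :
    ∀ᶠ τ in 𝓝 0, pen (β + τ • v) = pen β + τ * c := by
  have hpiece : ∀ i, ∀ᶠ τ in 𝓝 (0 : ℝ), ⟪u i, β + τ • v⟫ ≤ pen β + τ * c := by
    intro i
    simp only [inner_add_right, real_inner_smul_right]
    rcases (inner_le_pen hpen β i).lt_or_eq with hlt | heq
    · refine (ContinuousAt.eventually_lt (by fun_prop) (by fun_prop) ?_).mono fun _ h => h.le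
      simpa using hlt
    · exact Filter.Eventually.of_forall fun τ => by rw [heq, hslope i heq]
  obtain ⟨i₀, hi₀⟩ := exists_inner_eq_pen hpen β
  filter_upwards [Filter.eventually_all.2 hpiece] with τ hτ
  refine le_antisymm (hpen _ ▸ Finset.sup'_le _ _ fun i _ => hτ i) ?_
  have := inner_le_pen hpen (β + τ • v) i₀
  rwa [inner_add_right, real_inner_smul_right, hi₀, hslope i₀ hi₀] at this

theorem span_setOf_subdiff_eq (β : EuclideanSpace ℝ (Fin p)) :
    Submodule.span ℝ {x | subdiff pen x = subdiff pen β}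
      = (affineSpan ℝ (subdiff pen β)).directionᗮ := by
  have mem_subdiff {s y} : s ∈ subdiff pen y ↔ (∀ b, ⟪s, b⟫ ≤ pen b) ∧ ⟪s, y⟫ = pen y :=
    mem_subdiff_iff_of_sublinear (pen_zero_le hpen) (pen_add_le hpen)
  apply le_antisymm
  · refine Submodule.span_le.2 fun x hx => ?_
    rw [SetLike.mem_coe, mem_orthogonal_direction_affineSpan_iff, ← show subdiff pen x = _ from hx]
    intro a ha b hb
    rw [(mem_subdiff.1 ha).2, (mem_subdiff.1 hb).2]
  · intro v hv
    obtain ⟨i₀, hi₀⟩ := exists_inner_eq_pen hpen β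
    have active_mem : ∀ i, ⟪u i, β⟫ = pen β → u i ∈ subdiff pen β := fun i hi =>
      mem_subdiff.2 ⟨fun b => inner_le_pen hpen b i, hi⟩
    have hslope : ∀ s ∈ subdiff pen β, ⟪s, v⟫ = ⟪u i₀, v⟫ := fun s hs =>
      mem_orthogonal_direction_affineSpan_iff.1 hv s hs _ (active_mem i₀ hi₀)
    obtain ⟨τ, hτ, hτβ⟩ := exists_subdiff_add_smul_eq (pen_zero_le hpen) (pen_add_le hpen) hslope
      (nhdsWithin_le_nhds (eventually_pen_add_smul hpen fun i hi => hslope _ (active_mem i hi)))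
    exact mem_span_of_add_smul_mem (τ := τ) hτ.ne' rfl hτβ

end PolyhedralGauge

theorem pattern_complexity_eq_codim_general {p k : ℕ}
    (u : Fin (k + 1) → EuclideanSpace ℝ (Fin p))
    (pen : EuclideanSpace ℝ (Fin p) → ℝ)
    (hpen : ∀ x, pen x = Finset.univ.sup' Finset.univ_nonempty fun i => ⟪u i, x⟫)
    (β : EuclideanSpace ℝ (Fin p)) :
    Module.finrank ℝ (Submodule.span ℝ {x | subdiff pen x = subdiff pen β})
      = p - Module.finrank ℝ (affineSpan ℝ (subdiff pen β)).direction := by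
  have hsum := Submodule.finrank_add_finrank_orthogonal (affineSpan ℝ (subdiff pen β)).direction
  rw [finrank_euclideanSpace_fin] at hsum
  rw [span_setOf_subdiff_eq hpen]
  omega

/-- For a real-valued polyhedral gauge `pen`, the complexity of the pattern
of `β` (the dimension of the linear span of `C_β`) equals `p` minus the dimension of the
face `∂pen(β)` (the dimension of the direction space of its affine hull). -/
theorem pattern_complexity_eq_codim {p k : ℕ}
    (u : Fin (k + 1) → EuclideanSpace ℝ (Fin p)) (hu : u 0 = 0)
    (pen : EuclideanSpace ℝ (Fin p) → ℝ)
    (hpen : ∀ x, pen x = Finset.univ.sup' Finset.univ_nonempty fun i => ⟪u i, x⟫)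
    (β : EuclideanSpace ℝ (Fin p)) :
    Module.finrank ℝ (Submodule.span ℝ {x | subdiff pen x = subdiff pen β})
      = p - Module.finrank ℝ (affineSpan ℝ (subdiff pen β)).direction :=
  pattern_complexity_eq_codim_general u pen hpen β
end
end

section
/- Let X ∈ ℝ^{n×p}, y ∈ ℝ^n, λ > 0, and let pen : ℝ^p → ℝ be given by pen(x) = max{⟨u_1,x⟩,…,⟨u_k,x⟩} where u_1,…,u_k ∈ ℝ^p with u_1 = 0. Then the function f(b) = (1/2)‖y − Xb‖₂² + λ·pen(b) attains its infimum over ℝ^p, i.e. there exists b* ∈ ℝ^p with f(b*) ≤ f(b) for all b ∈ ℝ^p. -/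
open scoped RealInnerProductSpace

noncomputable section

/-!
Write `f b = φ (A b) + max (0, maxᵢ ⟪uᵢ, b⟫)` with `φ` continuous, bounded below and coercive, and
minimize `f` over a subspace `V` by induction on `dim V`. If some `d ≠ 0` in `V` is a direction of
recession (`A d = 0` and every `⟪uᵢ, d⟫ ≤ 0`), minimize over `V ∩ d^⊥` the objective built from the
pieces that are flat along `d` only: it is `≤ f`, unchanged by the component of `b` along `d`, and
equal to `f` at a minimizer pushed far enough along `d`, since the other pieces then drop below the
maximum. Otherwise `‖A b‖ + max (0, maxᵢ ⟪uᵢ, b⟫)` is positively homogeneous and positive on the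
unit sphere of `V`, hence `≥ c ‖b‖` for some `c > 0`, and `f` is coercive on `V`.
-/

open Filter Bornology Finset Module

section MaxInner

variable {E : Type*} [NormedAddCommGroup E] [InnerProductSpace ℝ E]

open Classical in
noncomputable def maxInner (U : Finset E) (b : E) : ℝ :=
  (insert 0 U).sup' (insert_nonempty 0 U) fun u => ⟪u, b⟫

variable (U : Finset E) (b : E)

lemma maxInner_eq_sup' (hU : 0 ∈ U) :
    maxInner U b = U.sup' (show U.Nonempty from ⟨0, hU⟩) fun u => ⟪u, b⟫ := by
  classical
  exact sup'_congr _ (insert_eq_of_mem hU) fun _ _ => rfl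

lemma maxInner_le_iff {a : ℝ} : maxInner U b ≤ a ↔ 0 ≤ a ∧ ∀ u ∈ U, ⟪u, b⟫ ≤ a := by
  simp [maxInner]

lemma maxInner_nonneg : 0 ≤ maxInner U b := by
  simp [maxInner]

lemma inner_le_maxInner {u : E} (hu : u ∈ U) : ⟪u, b⟫ ≤ maxInner U b := by
  classical
  exact le_sup' (fun u => ⟪u, b⟫) (mem_insert_of_mem hu)

lemma maxInner_mono {U' : Finset E} (h : U' ⊆ U) : maxInner U' b ≤ maxInner U b := by
  classical
  exact sup'_mono _ (insert_subset_insert 0 h) _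

lemma maxInner_smul {t : ℝ} (ht : 0 ≤ t) : maxInner U (t • b) = t * maxInner U b := by
  simp only [maxInner, mul₀_sup' ht, inner_smul_right]

lemma maxInner_add_of_forall_inner_eq_zero {d : E} (hd : ∀ u ∈ U, ⟪u, d⟫ = 0) :
    maxInner U (b + d) = maxInner U b := by
  classical
  refine sup'_congr _ rfl fun u hu => ?_
  rcases mem_insert.1 hu with rfl | hu
  · simp
  · rw [inner_add_right, hd u hu, add_zero]

lemma continuous_maxInner : Continuous (maxInner U) := by
  unfold maxInner
  exact Continuous.finset_sup'_apply _ fun _ _ => continuous_const.inner continuous_id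

/-- The pieces decreasing along `d` eventually drop below the maximum of the flat ones. -/
lemma exists_maxInner_add_smul_eq {d : E} (hUd : ∀ u ∈ U, ⟪u, d⟫ ≤ 0) :
    ∃ T : ℝ, maxInner U (b + T • d) = maxInner (U.filter (⟪·, d⟫ = 0)) b := by
  set U₀ := U.filter (⟪·, d⟫ = 0)
  have hsteep : ∀ᶠ T : ℝ in atTop, ∀ u ∈ U, ⟪u, d⟫ < 0 → ⟪u, b + T • d⟫ ≤ maxInner U₀ b := by
    refine (eventually_all_finset U).2 fun u _ => ?_
    by_cases hu : ⟪u, d⟫ < 0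
    · have hbot : Tendsto (fun T : ℝ => ⟪u, b⟫ + T * ⟪u, d⟫) atTop atBot :=
        tendsto_atBot_add_const_left _ _ (tendsto_id.atTop_mul_const_of_neg hu)
      filter_upwards [hbot.eventually_le_atBot (maxInner U₀ b)] with T hT _
      rwa [inner_add_right, inner_smul_right]
    · exact .of_forall fun _ h => absurd h hu
  obtain ⟨T, hT⟩ := hsteep.exists
  refine ⟨T, le_antisymm ((maxInner_le_iff _ _).2 ⟨maxInner_nonneg _ _, fun u hu => ?_⟩) ?_⟩
  · rcases (hUd u hu).lt_or_eq with hneg | hflat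
    · exact hT u hu hneg
    · rw [inner_add_right, inner_smul_right, hflat, mul_zero, add_zero]
      exact inner_le_maxInner _ _ (mem_filter.2 ⟨hu, hflat⟩)
  · calc maxInner U₀ b = maxInner U₀ (b + T • d) := by
          refine (maxInner_add_of_forall_inner_eq_zero _ _ fun u hu => ?_).symm
          rw [inner_smul_right, (mem_filter.1 hu).2, mul_zero]
      _ ≤ maxInner U (b + T • d) := maxInner_mono _ _ (filter_subset _ _)

end MaxInner

lemma exists_pos_mul_norm_le_of_homogeneous {G : Type*} [NormedAddCommGroup G] [NormedSpace ℝ G]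
    [FiniteDimensional ℝ G] {N : G → ℝ} (hN : Continuous N)
    (hhom : ∀ t : ℝ, 0 ≤ t → ∀ x, N (t • x) = t * N x) (hpos : ∀ x, x ≠ 0 → 0 < N x) :
    ∃ c > 0, ∀ x, c * ‖x‖ ≤ N x := by
  have hN0 : N 0 = 0 := by simpa using hhom 0 le_rfl 0
  cases subsingleton_or_nontrivial G
  · exact ⟨1, one_pos, fun x => by simp [Subsingleton.elim x 0, hN0]⟩
  obtain ⟨x₀, hx₀, hmin⟩ := (isCompact_sphere (0 : G) 1).exists_isMinOn
    (NormedSpace.sphere_nonempty.2 zero_le_one) hN.continuousOn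
  refine ⟨N x₀, hpos x₀ (ne_zero_of_mem_sphere one_ne_zero ⟨x₀, hx₀⟩), fun x => ?_⟩
  rcases eq_or_ne x 0 with rfl | hx
  · simp [hN0]
  have hx' : 0 < ‖x‖ := norm_pos_iff.2 hx
  have := hmin (show ‖x‖⁻¹ • x ∈ Metric.sphere (0 : G) 1 by
    rw [mem_sphere_zero_iff_norm, norm_smul, norm_inv, norm_norm, inv_mul_cancel₀ hx'.ne'])
  rw [Set.mem_ofPred_eq, hhom _ (inv_nonneg.2 hx'.le), le_inv_mul_iff₀ hx', mul_comm] at this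
  exact this

lemma tendsto_comp_add_of_tendsto_norm_add {F α : Type*} [NormedAddCommGroup F] {φ : F → ℝ}
    (hφb : BddBelow (Set.range φ)) (hφ : Tendsto φ (cobounded F) atTop) {l : Filter α}
    {a : α → F} {P : α → ℝ} (hP : ∀ x, 0 ≤ P x) (h : Tendsto (fun x => ‖a x‖ + P x) l atTop) :
    Tendsto (fun x => φ (a x) + P x) l atTop := by
  obtain ⟨m, hm⟩ := hφb
  refine tendsto_atTop.2 fun M => ?_
  rw [← comap_norm_atTop] at hφ
  obtain ⟨R, -, hR⟩ := (atTop_basis.comap norm).eventually_iff.1 (hφ.eventually_ge_atTop M)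
  filter_upwards [h.eventually_ge_atTop (R + (M - m))] with x hx
  have hmx : m ≤ φ (a x) := hm ⟨a x, rfl⟩
  by_cases hax : R ≤ ‖a x‖
  · linarith [hR (show a x ∈ norm ⁻¹' Set.Ici R from hax), hP x]
  · linarith

section Minimizer

variable {E F : Type*} [NormedAddCommGroup E] [InnerProductSpace ℝ E]
  [NormedAddCommGroup F] [NormedSpace ℝ F] {φ : F → ℝ} {A : E →ₗ[ℝ] F} {U : Finset E}
  {V : Submodule ℝ E}

lemma exists_isMinOn_comp_add_maxInner_of_recession {d : E} (hdV : d ∈ V) (hAd : A d = 0)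
    (hUd : ∀ u ∈ U, ⟪u, d⟫ ≤ 0)
    (h : ∃ b ∈ V ⊓ (ℝ ∙ d)ᗮ, IsMinOn (fun b => φ (A b) + maxInner (U.filter (⟪·, d⟫ = 0)) b)
      ↑(V ⊓ (ℝ ∙ d)ᗮ) b) :
    ∃ b ∈ V, IsMinOn (fun b => φ (A b) + maxInner U b) V b := by
  obtain ⟨b₀, hb₀, hmin⟩ := h
  obtain ⟨T, hT⟩ := exists_maxInner_add_smul_eq U b₀ hUd
  set U₀ := U.filter (⟪·, d⟫ = 0)
  refine ⟨b₀ + T • d, V.add_mem (Submodule.mem_inf.1 hb₀).1 (V.smul_mem T hdV), fun b hb => ?_⟩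
  obtain ⟨c, hc⟩ := Submodule.mem_span_singleton.1 ((ℝ ∙ d).starProjection_apply_mem b)
  have hb' : b + (-c) • d ∈ V ⊓ (ℝ ∙ d)ᗮ := by
    refine ⟨V.add_mem hb (V.smul_mem _ hdV), ?_⟩
    rw [neg_smul, ← sub_eq_add_neg, hc]
    exact (ℝ ∙ d).sub_starProjection_mem_orthogonal b
  have hflat : ∀ u ∈ U₀, ⟪u, (-c) • d⟫ = 0 := fun u hu => by
    rw [inner_smul_right, (mem_filter.1 hu).2, mul_zero]
  calc φ (A (b₀ + T • d)) + maxInner U (b₀ + T • d) = φ (A b₀) + maxInner U₀ b₀ := by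
        simp [hAd, hT]
    _ ≤ φ (A (b + (-c) • d)) + maxInner U₀ (b + (-c) • d) := hmin hb'
    _ = φ (A b) + maxInner U₀ b := by
        rw [map_add, map_smul, hAd, smul_zero, add_zero,
          maxInner_add_of_forall_inner_eq_zero U₀ b hflat]
    _ ≤ φ (A b) + maxInner U b := by
        gcongr
        exact maxInner_mono _ _ (filter_subset _ _)

variable [FiniteDimensional ℝ E]

lemma finrank_inf_orthogonal_singleton_lt {d : E} (hdV : d ∈ V) (hd : d ≠ 0) :
    finrank ℝ ↥(V ⊓ (ℝ ∙ d)ᗮ) < finrank ℝ V :=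
  Submodule.finrank_lt_finrank_of_lt <| inf_le_left.lt_of_not_ge fun h => hd <|
    inner_self_eq_zero.1 <| Submodule.mem_orthogonal_singleton_iff_inner_right.1 (h hdV).2

lemma exists_isMinOn_comp_add_maxInner_of_no_recession (hφc : Continuous φ)
    (hφb : BddBelow (Set.range φ)) (hφ : Tendsto φ (cobounded F) atTop)
    (hrec : ∀ d ∈ V, d ≠ 0 → A d = 0 → ∃ u ∈ U, 0 < ⟪u, d⟫) :
    ∃ b ∈ V, IsMinOn (fun b => φ (A b) + maxInner U b) V b := by
  have hA : Continuous A := A.continuous_of_finiteDimensional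
  have hpos (v : V) (hv : v ≠ 0) : 0 < ‖A v‖ + maxInner U v := by
    by_cases hAv : A v = 0
    · obtain ⟨u, hu, hud⟩ := hrec v v.2 (by simpa using hv) hAv
      simpa [hAv] using hud.trans_le (inner_le_maxInner U v hu)
    · exact add_pos_of_pos_of_nonneg (norm_pos_iff.2 hAv) (maxInner_nonneg U v)
  obtain ⟨c, hc, hcN⟩ := exists_pos_mul_norm_le_of_homogeneous
    (N := fun v : V => ‖A v‖ + maxInner U v)
    ((hA.comp continuous_subtype_val).norm.add ((continuous_maxInner U).comp continuous_subtype_val))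
    (fun t ht v => by
      simp only [Submodule.coe_smul, map_smul, norm_smul, maxInner_smul U _ ht,
        Real.norm_of_nonneg ht, mul_add])
    hpos
  have hcoercive : Tendsto (fun v : V => φ (A v) + maxInner U v) (cocompact V) atTop := by
    rw [← Metric.cobounded_eq_cocompact]
    exact tendsto_comp_add_of_tendsto_norm_add hφb hφ (fun v => maxInner_nonneg U v)
      (tendsto_atTop_mono hcN (tendsto_norm_cobounded_atTop.const_mul_atTop hc))
  obtain ⟨b, hb⟩ := ((hφc.comp (hA.comp continuous_subtype_val)).add
    ((continuous_maxInner U).comp continuous_subtype_val)).exists_forall_le hcoercive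
  exact ⟨b, b.2, fun b' hb' => hb ⟨b', hb'⟩⟩

theorem exists_isMinOn_comp_add_maxInner (hφc : Continuous φ) (hφb : BddBelow (Set.range φ))
    (hφ : Tendsto φ (cobounded F) atTop) (A : E →ₗ[ℝ] F) (U : Finset E) (V : Submodule ℝ E) :
    ∃ b ∈ V, IsMinOn (fun b => φ (A b) + maxInner U b) V b := by
  induction hV : finrank ℝ V using Nat.strong_induction_on generalizing V U with
  | _ m ih =>
    by_cases hrec : ∃ d ∈ V, d ≠ 0 ∧ A d = 0 ∧ ∀ u ∈ U, ⟪u, d⟫ ≤ 0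
    · obtain ⟨d, hdV, hd, hAd, hUd⟩ := hrec
      exact exists_isMinOn_comp_add_maxInner_of_recession hdV hAd hUd
        (ih _ (hV ▸ finrank_inf_orthogonal_singleton_lt hdV hd) _ _ rfl)
    · push Not at hrec
      exact exists_isMinOn_comp_add_maxInner_of_no_recession hφc hφb hφ hrec

end Minimizer

/-- The function `f(b) = (1/2)‖y − Xb‖₂² + λ·pen(b)` attains its infimum
over `ℝ^p`: there exists a minimizer. -/
theorem minimizer_exists {n p k : ℕ}
    (X : Matrix (Fin n) (Fin p) ℝ) (y : EuclideanSpace ℝ (Fin n))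
    (lam : ℝ) (hlam : 0 < lam)
    (u : Fin (k + 1) → EuclideanSpace ℝ (Fin p)) (hu : u 0 = 0)
    (pen : EuclideanSpace ℝ (Fin p) → ℝ)
    (hpen : ∀ x, pen x = Finset.univ.sup' Finset.univ_nonempty fun i => ⟪u i, x⟫) :
    ∃ bstar : EuclideanSpace ℝ (Fin p), ∀ b : EuclideanSpace ℝ (Fin p),
      (1/2) * ‖y - toEuc (X.mulVec bstar)‖^2 + lam * pen bstar
        ≤ (1/2) * ‖y - toEuc (X.mulVec b)‖^2 + lam * pen b := by
  classical
  have hU : 0 ∈ univ.image u := hu ▸ mem_image_of_mem u (mem_univ 0)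
  have hf (b : EuclideanSpace ℝ (Fin p)) : (1/2) * ‖y - toEuc (X.mulVec b)‖^2 + lam * pen b
      = lam * (‖y - toEuc (X.mulVec b)‖ ^ 2 / (2 * lam) + maxInner (univ.image u) b) := by
    rw [hpen, maxInner_eq_sup' _ _ hU, sup'_image]
    field_simp
    simp only [Function.comp_def]
  obtain ⟨bstar, -, hmin⟩ := exists_isMinOn_comp_add_maxInner
    (φ := fun z => ‖y - z‖ ^ 2 / (2 * lam)) (by fun_prop) ⟨0, by rintro _ ⟨z, rfl⟩; positivity⟩
    (((tendsto_pow_atTop two_ne_zero).comp (tendsto_norm_cobounded_atTop.comp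
      (tendsto_const_sub_cobounded y))).atTop_div_const (by positivity))
    (Matrix.toEuclideanLin X) (univ.image u) ⊤
  refine ⟨bstar, fun b => ?_⟩
  rw [hf, hf]
  exact mul_le_mul_of_nonneg_left (hmin Submodule.mem_top) hlam.le
end
end
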